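/- If S, T ∈ hom(𝓗₋₊) satisfy 𝔉ₛ(S) ≥ 0 and 𝔉ₛ(T) ≥ 0 (positive semidefinite on 𝓗₊₋), then 𝔉ₛ(ST) ≥ 0. -/

import Mathlib

/-!
In the orthonormal product bases `e ⊗ θe` of `𝓗₊₋` and `θe ⊗ e` of `𝓗₋₊`, the matrix of `𝔉ₛ(T)`
is a reindexing of the matrix of `T`, and composition becomes the contraction
`𝔉ₛ(ST)_{(i,a),(j,b)} = ∑_{c,d} 𝔉ₛ(S)_{(i,d),(j,c)} 𝔉ₛ(T)_{(d,a),(c,b)}`.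
This contraction is `V* (𝔉ₛ(S) ⊗ 𝔉ₛ(T)) V`, where `V` identifies the two middle indices,
so it is positive semidefinite as a compression of a Kronecker product of positive semidefinite
matrices.
-/

open scoped ComplexInnerProductSpace ComplexOrder

namespace Matrix

variable {𝕜 ι κ ν : Type*} [RCLike 𝕜] [Fintype ι] [Fintype κ] [Fintype ν]

def stringConv (A : Matrix (ι × κ) (ι × κ) 𝕜) (B : Matrix (κ × ν) (κ × ν) 𝕜) :
    Matrix (ι × ν) (ι × ν) 𝕜 :=
  of fun p q => ∑ d, ∑ c, A (p.1, d) (q.1, c) * B (d, p.2) (c, q.2)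

open scoped Kronecker in
theorem PosSemidef.stringConv {A : Matrix (ι × κ) (ι × κ) 𝕜} {B : Matrix (κ × ν) (κ × ν) 𝕜}
    (hA : A.PosSemidef) (hB : B.PosSemidef) : (A.stringConv B).PosSemidef := by
  classical
  let V : Matrix ((ι × κ) × (κ × ν)) (ι × ν) 𝕜 :=
    of fun r p => if r.1.1 = p.1 ∧ r.1.2 = r.2.1 ∧ r.2.2 = p.2 then 1 else 0
  have hV : A.stringConv B = Vᴴ * (A ⊗ₖ B) * V := by
    ext p q
    simp only [V, Matrix.stringConv, of_apply, mul_apply, conjTranspose_apply, kroneckerMap_apply,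
      Fintype.sum_prod_type, ite_and, RCLike.star_def, apply_ite (starRingEnd 𝕜), map_one, map_zero,
      ite_mul, mul_ite, one_mul, zero_mul, mul_one, mul_zero, Finset.sum_ite_irrel,
      Finset.sum_const_zero, Finset.sum_ite_eq, Finset.sum_ite_eq', Finset.mem_univ, if_true]
    exact Finset.sum_comm
  rw [hV]
  exact (hA.kronecker hB).conjTranspose_mul_mul_same V

end Matrix

theorem LinearMap.isPositive_of_forall_inner_nonneg {V : Type*} [NormedAddCommGroup V]
    [InnerProductSpace ℂ V] {T : V →ₗ[ℂ] V} (hT : ∀ x, 0 ≤ ⟪x, T x⟫) : T.IsPositive := by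
  have hsymm : T.IsSymmetric := (isSymmetric_iff_inner_map_self_real T).2 fun v => by
    rw [inner_conj_symm, ← inner_conj_symm (T v) v]
    exact (hT v).isSelfAdjoint.star_eq.symm
  exact (T.isPositive_iff).2 ⟨hsymm, fun x => hsymm x x ▸ hT x⟩

namespace OrthonormalBasis

variable {𝕜 ι κ E F G : Type*} [RCLike 𝕜] [Fintype ι] [Fintype κ]
  [NormedAddCommGroup E] [InnerProductSpace 𝕜 E] [NormedAddCommGroup F] [InnerProductSpace 𝕜 F]
  [NormedAddCommGroup G] [InnerProductSpace 𝕜 G]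

theorem toMatrix_apply [DecidableEq ι] (b : OrthonormalBasis ι 𝕜 E) (A : E →ₗ[𝕜] E) (i j : ι) :
    LinearMap.toMatrix b.toBasis b.toBasis A i j = inner 𝕜 (b i) (A (b j)) := by
  rw [LinearMap.toMatrix_apply, b.coe_toBasis_repr_apply, b.coe_toBasis, b.repr_apply_apply]

noncomputable def mapAntiunitary (b : OrthonormalBasis ι 𝕜 E) (θ : E ≃ₗ⋆[𝕜] F)
    (hθ : ∀ x x', inner 𝕜 x x' = inner 𝕜 (θ x') (θ x)) : OrthonormalBasis ι 𝕜 F :=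
  OrthonormalBasis.mk (v := fun i => θ (b i))
    (by
      classical
      rw [orthonormal_iff_ite]
      intro i j
      rw [← hθ, orthonormal_iff_ite.mp b.orthonormal]
      exact if_congr eq_comm rfl rfl)
    (by
      change ⊤ ≤ Submodule.span 𝕜 (Set.range (θ.toLinearMap ∘ b))
      rw [Set.range_comp, Submodule.span_image, ← b.coe_toBasis, b.toBasis.span_eq,
        Submodule.map_top, LinearEquiv.range])

@[simp]
theorem coe_mapAntiunitary (b : OrthonormalBasis ι 𝕜 E) (θ : E ≃ₗ⋆[𝕜] F)
    (hθ : ∀ x x', inner 𝕜 x x' = inner 𝕜 (θ x') (θ x)) :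
    ⇑(b.mapAntiunitary θ hθ) = fun i => θ (b i) :=
  OrthonormalBasis.coe_mk _ _

noncomputable def ofTensorMap (t : E →ₗ[𝕜] F →ₗ[𝕜] G)
    (ht : ∀ x y x' y', inner 𝕜 (t x y) (t x' y') = inner 𝕜 x x' * inner 𝕜 y y')
    (hspan : ⊤ ≤ Submodule.span 𝕜 (Set.range fun p : E × F => t p.1 p.2))
    (e : OrthonormalBasis ι 𝕜 E) (f : OrthonormalBasis κ 𝕜 F) : OrthonormalBasis (ι × κ) 𝕜 G :=
  OrthonormalBasis.mk (v := fun p => t (e p.1) (f p.2))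
    (by
      classical
      rw [orthonormal_iff_ite]
      rintro ⟨i, k⟩ ⟨j, l⟩
      rw [ht, orthonormal_iff_ite.mp e.orthonormal, orthonormal_iff_ite.mp f.orthonormal,
        ite_zero_mul_ite_zero, one_mul]
      exact if_congr Prod.ext_iff.symm rfl rfl)
    (by
      refine hspan.trans (Submodule.span_le.2 ?_)
      rintro _ ⟨⟨x, y⟩, rfl⟩
      have hrange : (Set.range fun p : ι × κ => t (e p.1) (f p.2)) =
          Set.image2 (fun x y => t x y) (Set.range e) (Set.range f) :=
        (Set.image2_range (fun x y => t x y) e f).symm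
      rw [SetLike.mem_coe, hrange, ← Submodule.map₂_span_span, ← e.coe_toBasis,
        ← f.coe_toBasis, e.toBasis.span_eq, f.toBasis.span_eq]
      exact Submodule.apply_mem_map₂ t Submodule.mem_top Submodule.mem_top)

@[simp]
theorem coe_ofTensorMap (t : E →ₗ[𝕜] F →ₗ[𝕜] G)
    (ht : ∀ x y x' y', inner 𝕜 (t x y) (t x' y') = inner 𝕜 x x' * inner 𝕜 y y')
    (hspan : ⊤ ≤ Submodule.span 𝕜 (Set.range fun p : E × F => t p.1 p.2))
    (e : OrthonormalBasis ι 𝕜 E) (f : OrthonormalBasis κ 𝕜 F) :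
    ⇑(ofTensorMap t ht hspan e f) = fun p => t (e p.1) (f p.2) :=
  OrthonormalBasis.coe_mk _ _

end OrthonormalBasis

theorem toMatrix_map_comp_eq_stringConv {𝕜 ι G H : Type*} [RCLike 𝕜] [Fintype ι] [DecidableEq ι]
    [NormedAddCommGroup G] [InnerProductSpace 𝕜 G] [NormedAddCommGroup H] [InnerProductSpace 𝕜 H]
    (bg : OrthonormalBasis (ι × ι) 𝕜 G) (bh : OrthonormalBasis (ι × ι) 𝕜 H)
    (F : (G →L[𝕜] G) → (H →L[𝕜] H))
    (hF : ∀ R i a j b, inner 𝕜 (bh (i, a)) (F R (bh (j, b))) = inner 𝕜 (bg (j, i)) (R (bg (b, a))))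
    (S T : G →L[𝕜] G) :
    LinearMap.toMatrix bh.toBasis bh.toBasis (F (S ∘L T) : H →ₗ[𝕜] H) =
      (LinearMap.toMatrix bh.toBasis bh.toBasis (F S : H →ₗ[𝕜] H)).stringConv
        (LinearMap.toMatrix bh.toBasis bh.toBasis (F T : H →ₗ[𝕜] H)) := by
  ext ⟨i, a⟩ ⟨j, b⟩
  simp only [Matrix.stringConv, Matrix.of_apply, OrthonormalBasis.toMatrix_apply,
    ContinuousLinearMap.coe_coe, hF, ContinuousLinearMap.comp_apply]
  conv_lhs => rw [← bg.sum_repr' (T (bg (b, a)))]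
  rw [map_sum, inner_sum, Fintype.sum_prod_type, Finset.sum_comm]
  simp only [map_smul, inner_smul_right, mul_comm]

theorem sft_mul_nonneg_general
{Hp Hm Hmp Hpm : Type}
    [NormedAddCommGroup Hp] [InnerProductSpace ℂ Hp] [FiniteDimensional ℂ Hp]
    [NormedAddCommGroup Hm] [InnerProductSpace ℂ Hm]
    [NormedAddCommGroup Hmp] [InnerProductSpace ℂ Hmp]
    [NormedAddCommGroup Hpm] [InnerProductSpace ℂ Hpm]
(θ : Hp ≃ₗ⋆[ℂ] Hm)
    (hθ : ∀ x x' : Hp, ⟪x, x'⟫ = ⟪θ x', θ x⟫)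
(tmp : Hm →ₗ[ℂ] Hp →ₗ[ℂ] Hmp) (tpm : Hp →ₗ[ℂ] Hm →ₗ[ℂ] Hpm)
    (htmp : ∀ (y : Hm) (x : Hp) (y' : Hm) (x' : Hp),
      ⟪tmp y x, tmp y' x'⟫ = ⟪y, y'⟫ * ⟪x, x'⟫)
    (htpm : ∀ (x : Hp) (y : Hm) (x' : Hp) (y' : Hm),
      ⟪tpm x y, tpm x' y'⟫ = ⟪x, x'⟫ * ⟪y, y'⟫)
    (hmp_span : ⊤ ≤ Submodule.span ℂ (Set.range fun p : Hm × Hp => tmp p.1 p.2))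
    (hpm_span : ⊤ ≤ Submodule.span ℂ (Set.range fun p : Hp × Hm => tpm p.1 p.2))
(Fs : (Hmp →L[ℂ] Hmp) → (Hpm →L[ℂ] Hpm))
    (hFs : ∀ (T : Hmp →L[ℂ] Hmp) (x x' : Hp) (y y' : Hm),
      ⟪tpm x y, Fs T (tpm x' y')⟫ = ⟪tmp (θ x') x, T (tmp y' (θ.symm y))⟫)
    (S T : Hmp →L[ℂ] Hmp)
    (hS : ∀ w : Hpm, 0 ≤ ⟪w, Fs S w⟫) (hT : ∀ w : Hpm, 0 ≤ ⟪w, Fs T w⟫) :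
    ∀ w : Hpm, 0 ≤ ⟪w, Fs (S ∘L T) w⟫ := by
  let e := stdOrthonormalBasis ℂ Hp
  let f := e.mapAntiunitary θ hθ
  let bg := OrthonormalBasis.ofTensorMap tmp htmp hmp_span f e
  let bh := OrthonormalBasis.ofTensorMap tpm htpm hpm_span e f
  have hF : ∀ R i a j b, ⟪bh (i, a), Fs R (bh (j, b))⟫ = ⟪bg (j, i), R (bg (b, a))⟫ := by
    intro R i a j b
    simpa [bh, bg, f] using hFs R (e i) (e j) (f a) (f b)
  have toMatrix_posSemidef : ∀ R, (∀ w, 0 ≤ ⟪w, Fs R w⟫) →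
      (LinearMap.toMatrix bh.toBasis bh.toBasis (Fs R : Hpm →ₗ[ℂ] Hpm)).PosSemidef :=
    fun R hR => (LinearMap.posSemidef_toMatrix_iff bh).2
      (LinearMap.isPositive_of_forall_inner_nonneg hR)
  have hST := (toMatrix_posSemidef S hS).stringConv (toMatrix_posSemidef T hT)
  rw [← toMatrix_map_comp_eq_stringConv bg bh Fs hF, LinearMap.posSemidef_toMatrix_iff] at hST
  exact hST.inner_nonneg_right

/-- If `𝔉ₛ(S) ≥ 0` and `𝔉ₛ(T) ≥ 0` then `𝔉ₛ(ST) ≥ 0`. -/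
theorem sft_mul_nonneg
{Hp Hm Hmp Hpm : Type}
    [NormedAddCommGroup Hp] [InnerProductSpace ℂ Hp] [FiniteDimensional ℂ Hp]
    [NormedAddCommGroup Hm] [InnerProductSpace ℂ Hm] [FiniteDimensional ℂ Hm]
    [NormedAddCommGroup Hmp] [InnerProductSpace ℂ Hmp] [FiniteDimensional ℂ Hmp]
    [NormedAddCommGroup Hpm] [InnerProductSpace ℂ Hpm] [FiniteDimensional ℂ Hpm]
(θ : Hp ≃ₗ⋆[ℂ] Hm)
    (hθ : ∀ x x' : Hp, ⟪x, x'⟫ = ⟪θ x', θ x⟫)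
(tmp : Hm →ₗ[ℂ] Hp →ₗ[ℂ] Hmp) (tpm : Hp →ₗ[ℂ] Hm →ₗ[ℂ] Hpm)
    (htmp : ∀ (y : Hm) (x : Hp) (y' : Hm) (x' : Hp),
      ⟪tmp y x, tmp y' x'⟫ = ⟪y, y'⟫ * ⟪x, x'⟫)
    (htpm : ∀ (x : Hp) (y : Hm) (x' : Hp) (y' : Hm),
      ⟪tpm x y, tpm x' y'⟫ = ⟪x, x'⟫ * ⟪y, y'⟫)
    (hmp_span : ⊤ ≤ Submodule.span ℂ (Set.range fun p : Hm × Hp => tmp p.1 p.2))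
    (hpm_span : ⊤ ≤ Submodule.span ℂ (Set.range fun p : Hp × Hm => tpm p.1 p.2))
(Fs : (Hmp →L[ℂ] Hmp) → (Hpm →L[ℂ] Hpm))
    (hFs : ∀ (T : Hmp →L[ℂ] Hmp) (x x' : Hp) (y y' : Hm),
      ⟪tpm x y, Fs T (tpm x' y')⟫ = ⟪tmp (θ x') x, T (tmp y' (θ.symm y))⟫)
    (S T : Hmp →L[ℂ] Hmp)
    (hS : ∀ w : Hpm, 0 ≤ ⟪w, Fs S w⟫) (hT : ∀ w : Hpm, 0 ≤ ⟪w, Fs T w⟫) :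
    ∀ w : Hpm, 0 ≤ ⟪w, Fs (S ∘L T) w⟫ :=
  sft_mul_nonneg_general θ hθ tmp tpm htmp htpm hmp_span hpm_span Fs hFs S T hS hT
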